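/- Let m ≥ 2 be a natural number and let t > 0 and P ∈ (0,1) be real numbers. Set Δ = 4·t²·P·(m−1)·(1−P) + t⁴ and W₂ = (2·(m−1)·P + t² + √Δ) / (2·(m−1+t²)). Then for every real W with 0 ≤ W ≤ 1, the inequality √(m−1)·(W − P) − t·√(W − W²) > 0 holds if and only if W > W₂. -/

import Mathlib

/-!
With `n = m - 1`, the rejection condition `t √(W - W²) < √n (W - P)` says exactly that `W > P` and
that the quadratic `q(W) = n (W - P)² - t² (W - W²)` is positive. Since `q(P) = -t² P (1 - P) < 0`,
the point `P` lies strictly between the two roots of `q`, so to the right of `P` the quadratic is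
positive exactly beyond its larger root `W₂`.
-/

theorem lt_and_quadratic_pos_iff_root_lt {a b c x₀ x : ℝ} (ha : 0 < a)
    (hx₀ : a * x₀ * x₀ + b * x₀ + c < 0) :
    x₀ < x ∧ 0 < a * x * x + b * x + c ↔ (-b + √(discrim a b c)) / (2 * a) < x := by
  have completed_square :
      ∀ y, 4 * a * (a * y * y + b * y + c) = (2 * a * y + b) ^ 2 - discrim a b c := fun y => by
    unfold discrim; ring
  have hdisc : (2 * a * x₀ + b) ^ 2 < discrim a b c := by nlinarith [completed_square x₀]
  set s := √(discrim a b c)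
  have hs : s ^ 2 = discrim a b c := Real.sq_sqrt (by nlinarith)
  obtain ⟨hx₀_left, hx₀_right⟩ : -s < 2 * a * x₀ + b ∧ 2 * a * x₀ + b < s :=
    abs_lt.mp (abs_lt_of_sq_lt_sq (hs ▸ hdisc) (Real.sqrt_nonneg _))
  rw [div_lt_iff₀ (by positivity), neg_add_lt_iff_lt_add, mul_comm x, add_comm b]
  constructor
  · rintro ⟨hx, hq⟩
    have hy : -s < 2 * a * x + b := by nlinarith
    have : s ^ 2 < (2 * a * x + b) ^ 2 := by nlinarith [completed_square x]
    nlinarith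
  · intro hx
    refine ⟨by nlinarith, ?_⟩
    have : s ^ 2 < (2 * a * x + b) ^ 2 := pow_lt_pow_left₀ hx (Real.sqrt_nonneg _) two_ne_zero
    nlinarith [completed_square x]

theorem mul_sqrt_lt_sqrt_mul_iff {n t u d : ℝ} (hn : 0 < n) (ht : 0 ≤ t) (hu : 0 ≤ u) :
    t * √u < √n * d ↔ 0 < d ∧ t ^ 2 * u < n * d ^ 2 := by
  have hlhs : 0 ≤ t * √u := by positivity
  have hsquare : (t * √u) ^ 2 < (√n * d) ^ 2 ↔ t ^ 2 * u < n * d ^ 2 := by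
    rw [mul_pow, mul_pow, Real.sq_sqrt hu, Real.sq_sqrt hn.le]
  constructor
  · intro h
    have hd : 0 < d := pos_of_mul_pos_right (hlhs.trans_lt h) (Real.sqrt_nonneg n)
    exact ⟨hd, hsquare.mp (pow_lt_pow_left₀ h hlhs two_ne_zero)⟩
  · rintro ⟨hd, h⟩
    exact (pow_lt_pow_iff_left₀ hlhs (by positivity) two_ne_zero).mp (hsquare.mpr h)

theorem cbw_rejection_iff_gt_root (m : ℕ) (hm : 2 ≤ m) (t P : ℝ) (ht : 0 < t)
    (hP0 : 0 < P) (hP1 : P < 1) :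
    ∀ W : ℝ, 0 ≤ W → W ≤ 1 →
      (Real.sqrt ((m : ℝ) - 1) * (W - P) - t * Real.sqrt (W - W ^ 2) > 0 ↔
        W > (2 * ((m : ℝ) - 1) * P + t ^ 2 +
              Real.sqrt (4 * t ^ 2 * P * ((m : ℝ) - 1) * (1 - P) + t ^ 4)) /
            (2 * ((m : ℝ) - 1 + t ^ 2))) := by
  intro W hW0 hW1
  have hn : 0 < (m : ℝ) - 1 := by
    have : (2 : ℝ) ≤ m := by exact_mod_cast hm
    linarith
  have hq_neg_at_P : ((m : ℝ) - 1 + t ^ 2) * P * P + -(2 * ((m : ℝ) - 1) * P + t ^ 2) * P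
      + ((m : ℝ) - 1) * P ^ 2 < 0 := by
    nlinarith [mul_pos (mul_pos (pow_pos ht 2) hP0) (sub_pos.mpr hP1)]
  have key := lt_and_quadratic_pos_iff_root_lt (by positivity) hq_neg_at_P (x := W)
  have hdisc : discrim ((m : ℝ) - 1 + t ^ 2) (-(2 * ((m : ℝ) - 1) * P + t ^ 2))
      (((m : ℝ) - 1) * P ^ 2) = 4 * t ^ 2 * P * ((m : ℝ) - 1) * (1 - P) + t ^ 4 := by
    unfold discrim; ring
  rw [hdisc, neg_neg] at key
  rw [gt_iff_lt, sub_pos, mul_sqrt_lt_sqrt_mul_iff hn ht.le (by nlinarith), gt_iff_lt, ← key,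
    sub_pos]
  exact and_congr_right fun _ => by constructor <;> intro h <;> linarith
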